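/- arXiv:1602.01675 — 7 statements merged into one kernel-verified Lean document; each statement's English description precedes it below -/
import Mathlib

section
/- Let V : ℝ^d → ℝ be twice continuously differentiable and set f(q) = −∇V(q), and let h > 0. Let Ā : [0,1]×[0,1] → ℝ and B̄, B̂, C : [0,1] → ℝ be continuous coefficient functions satisfying the symplectic conditions (i) B̂(τ)(1 − C(τ)) = B̄(τ) for all τ and (ii) B̂(τ)(B̄(σ) − Ā(τ,σ)) = B̂(σ)(B̄(τ) − Ā(σ,τ)) for all τ, σ. Suppose Q : [0,1] → (ℝ^d × ℝ^d) → ℝ^d is such that (τ, z) ↦ Q(τ)(z) is continuous, z ↦ Q(τ)(z) is continuously differentiable with (τ, z) ↦ D_z Q(τ)(z) jointly continuous, and for all τ ∈ [0,1] and all z = (p, q): Q(τ)(p,q) = q + h·C(τ)·p + h²·∫₀¹ Ā(τ,σ)·f(Q(σ)(p,q)) dσ. Define the one-step map Φ(p,q) = (p + h·∫₀¹ B̂(τ)·f(Q(τ)(p,q)) dτ, q + h·p + h²·∫₀¹ B̄(τ)·f(Q(τ)(p,q)) dτ). Then Φ is symplectic: for every z and all tangent vectors u = (u_p, u_q), v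 = (v_p, v_q) in ℝ^d × ℝ^d, writing DΦ(z)u = (u_p', u_q') and DΦ(z)v = (v_p', v_q'), one has ⟨u_p', v_q'⟩ − ⟨v_p', u_q'⟩ = ⟨u_p, v_q⟩ − ⟨v_p, u_q⟩. -/
/-!
Differentiating the stage equations and the update shows that `DΦ(z)` is the same csRKN step
applied to the variational equation, with stage forces `a(τ) = f'(Q(τ)) DQ(τ) u` and
`b(τ) = f'(Q(τ)) DQ(τ) v`. As `f' = -∇²V` is symmetric, `⟪a(τ), DQ(τ) v⟫ = ⟪b(τ), DQ(τ) u⟫`.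
Integrating this identity against `B̂` and using (i) to replace `B̂ C` by `B̂ - B̄` expresses
`ω(DΦ u, DΦ v) - ω(u, v)` through the weights `∫ B̂ a`, `∫ B̄ b`, … and the double integral
`∫∫ M(τ,σ) ⟪a(τ), b(σ)⟫` with `M(τ,σ) = B̂(τ) (B̄(σ) - A(τ,σ))`. By (ii) the kernel `M` is
symmetric, so by Fubini this double integral is symmetric in `a` and `b`, and everything cancels.
-/

open intervalIntegral RealInnerProductSpace
open Set MeasureTheory Metric
open scoped Interval

section ParametricIntegral

variable {E : Type*} [NormedAddCommGroup E] [NormedSpace ℝ E] {a b : ℝ}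

theorem continuousOn_parametric_intervalIntegral_of_continuousOn {X : Type*} [TopologicalSpace X]
    {s : Set X} {F : X → ℝ → E} (hab : a ≤ b)
    (hF : ContinuousOn (fun p : X × ℝ => F p.1 p.2) (s ×ˢ Icc a b)) :
    ContinuousOn (fun x => ∫ t in a..b, F x t) s := by
  rw [continuousOn_iff_continuous_domRestrict]
  have hG : Continuous (Function.uncurry fun (x : s) t => F x (projIcc a b hab t)) :=
    hF.comp_continuous (f := fun p : s × ℝ => ((p.1 : X), (projIcc a b hab p.2 : ℝ)))
      (by fun_prop) fun p => ⟨p.1.2, Subtype.mem _⟩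
  refine (continuous_parametric_intervalIntegral_of_continuous' (μ := volume) hG a b).congr
    fun x => integral_congr fun t ht => ?_
  rw [uIcc_of_le hab] at ht
  simp [projIcc_of_mem hab ht]

theorem intervalIntegral_intervalIntegral_swap_of_continuousOn {c d : ℝ} {F : ℝ → ℝ → E}
    (hF : ContinuousOn (fun p : ℝ × ℝ => F p.1 p.2) (uIcc a b ×ˢ uIcc c d)) :
    ∫ x in a..b, ∫ y in c..d, F x y = ∫ y in c..d, ∫ x in a..b, F x y :=
  intervalIntegral_intervalIntegral_swap <|
    (hF.integrableOn_compact (isCompact_uIcc.prod isCompact_uIcc)).mono_set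
      (prod_mono uIoc_subset_uIcc uIoc_subset_uIcc)

theorem hasFDerivAt_intervalIntegral_of_continuousOn {G : Type*} [NormedAddCommGroup G]
    [NormedSpace ℝ G] [ProperSpace G] [CompleteSpace E] (hab : a ≤ b)
    {F : ℝ → G → E} {F' : ℝ → G → G →L[ℝ] E} (z : G)
    (hF : ContinuousOn (fun p : ℝ × G => F p.1 p.2) (Icc a b ×ˢ univ))
    (hF' : ContinuousOn (fun p : ℝ × G => F' p.1 p.2) (Icc a b ×ˢ univ))
    (hF_deriv : ∀ t ∈ Icc a b, ∀ w, HasFDerivAt (F t) (F' t w) w) :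
    HasFDerivAt (fun w => ∫ t in a..b, F t w) (∫ t in a..b, F' t z) z := by
  obtain ⟨M, hM⟩ : ∃ M, ∀ p ∈ Icc a b ×ˢ closedBall z 1, ‖F' p.1 p.2‖ ≤ M :=
    (isCompact_Icc.prod (isCompact_closedBall z 1)).exists_bound_of_continuousOn
      (hF'.mono (prod_mono subset_rfl (subset_univ _)))
  have hIoc : Ι a b ⊆ Icc a b := by rw [uIoc_of_le hab]; exact Ioc_subset_Icc_self
  refine hasFDerivAt_integral_of_dominated_of_fderiv_le'' (F := fun w t => F t w)
    (F' := fun w t => F' t w) (bound := fun _ => M) (ball_mem_nhds z one_pos)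
    (.of_forall fun w => ((hF.uncurry_right w (mem_univ w)).mono hIoc).aestronglyMeasurable
      measurableSet_uIoc)
    ((hF.uncurry_right z (mem_univ z)).intervalIntegrable_of_Icc hab)
    (((hF'.uncurry_right z (mem_univ z)).mono hIoc).aestronglyMeasurable measurableSet_uIoc) ?_
    intervalIntegrable_const ?_
  · exact (ae_restrict_mem measurableSet_uIoc).mono fun t ht w hw =>
      hM (t, w) ⟨hIoc ht, ball_subset_closedBall hw⟩
  · exact (ae_restrict_mem measurableSet_uIoc).mono fun t ht w _ => hF_deriv t (hIoc ht) w

theorem intervalIntegral_smul_apply {F : Type*} [NormedAddCommGroup F] [NormedSpace ℝ F]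
    [CompleteSpace E] {c : ℝ → ℝ} {L : ℝ → F →L[ℝ] E}
    (hL : IntervalIntegrable (fun t => c t • L t) volume a b) (w : F) :
    (∫ t in a..b, c t • L t) w = ∫ t in a..b, c t • L t w :=
  ContinuousLinearMap.intervalIntegral_apply hL w

end ParametricIntegral

section InnerIntegral

variable {E : Type*} [NormedAddCommGroup E] [InnerProductSpace ℝ E] [CompleteSpace E] {a b : ℝ}

theorem inner_intervalIntegral (c : E) {g : ℝ → E} (hg : IntervalIntegrable g volume a b) :
    ⟪c, ∫ t in a..b, g t⟫ = ∫ t in a..b, ⟪c, g t⟫ :=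
  ((innerSL ℝ c).intervalIntegral_comp_comm hg).symm

theorem intervalIntegral_inner_integral_smul_comm (hab : a ≤ b) {x y : ℝ → E}
    (hx : ContinuousOn x (Icc a b)) (hy : ContinuousOn y (Icc a b)) {M : ℝ → ℝ → ℝ}
    (hM : ContinuousOn (fun p : ℝ × ℝ => M p.1 p.2) (Icc a b ×ˢ Icc a b))
    (hM_symm : ∀ s ∈ Icc a b, ∀ t ∈ Icc a b, M s t = M t s) :
    ∫ s in a..b, ⟪x s, ∫ t in a..b, M s t • y t⟫ =
      ∫ s in a..b, ⟪y s, ∫ t in a..b, M s t • x t⟫ := by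
  have expand : ∀ {x y : ℝ → E}, ContinuousOn y (Icc a b) →
      ∫ s in a..b, ⟪x s, ∫ t in a..b, M s t • y t⟫ =
        ∫ s in a..b, ∫ t in a..b, M s t * ⟪x s, y t⟫ := by
    intro x y hy
    refine integral_congr fun s hs => ?_
    rw [uIcc_of_le hab] at hs
    rw [inner_intervalIntegral (g := fun t => M s t • y t) _
      (((hM.uncurry_left s hs).smul hy).intervalIntegrable_of_Icc hab)]
    simp only [inner_smul_right]
  rw [expand hy, expand hx, intervalIntegral_intervalIntegral_swap_of_continuousOn]
  · refine integral_congr fun s hs => integral_congr fun t ht => ?_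
    rw [uIcc_of_le hab] at hs ht
    rw [hM_symm t ht s hs, real_inner_comm]
  · rw [uIcc_of_le hab]
    exact hM.mul ((hx.comp continuous_fst.continuousOn mapsTo_fst_prod).inner
      (hy.comp continuous_snd.continuousOn mapsTo_snd_prod))

end InnerIntegral

section Method

variable {E : Type*} [NormedAddCommGroup E] [NormedSpace ℝ E]

-- `k σ` stands for the stage force `f (Q σ)`; keeping it abstract lets the same formulas
-- describe the linearised method.
noncomputable def csRKNStage (h : ℝ) (A : ℝ → ℝ → ℝ) (C : ℝ → ℝ) (k : ℝ → E) (w : E × E)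
    (τ : ℝ) : E :=
  w.2 + (h * C τ) • w.1 + h ^ 2 • ∫ σ in (0:ℝ)..1, A τ σ • k σ

noncomputable def csRKNUpdate (h : ℝ) (Bbar Bhat : ℝ → ℝ) (k : ℝ → E) (w : E × E) : E × E :=
  (w.1 + h • ∫ τ in (0:ℝ)..1, Bhat τ • k τ,
    w.2 + h • w.1 + h ^ 2 • ∫ τ in (0:ℝ)..1, Bbar τ • k τ)

theorem smul_csRKNStage_eq {h : ℝ} {A : ℝ → ℝ → ℝ} {Bbar Bhat C : ℝ → ℝ} {k : ℝ → E} {τ : ℝ}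
    (hsym : Bhat τ * (1 - C τ) = Bbar τ)
    (hBk : IntervalIntegrable (fun σ => Bbar σ • k σ) volume 0 1)
    (hAk : IntervalIntegrable (fun σ => A τ σ • k σ) volume 0 1) (w : E × E) :
    Bhat τ • csRKNStage h A C k w τ =
      Bhat τ • (csRKNUpdate h Bbar Bhat k w).2 - (h * Bbar τ) • w.1 -
        h ^ 2 • ∫ σ in (0:ℝ)..1, (Bhat τ * (Bbar σ - A τ σ)) • k σ := by
  have hsplit : ∫ σ in (0:ℝ)..1, (Bhat τ * (Bbar σ - A τ σ)) • k σ =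
      Bhat τ • ((∫ σ in (0:ℝ)..1, Bbar σ • k σ) - ∫ σ in (0:ℝ)..1, A τ σ • k σ) := by
    rw [← integral_sub hBk hAk, ← intervalIntegral.integral_smul]
    simp only [mul_smul, sub_smul, smul_sub]
  rw [hsplit, csRKNStage, csRKNUpdate, ← hsym]
  module

end Method

section Variational

variable {E G : Type*} [NormedAddCommGroup E] [NormedSpace ℝ E] [NormedAddCommGroup G]
  [NormedSpace ℝ G] {f : E → E}

theorem continuousOn_fderiv_comp_fderiv {Q : ℝ → G → E} (hf : ContDiff ℝ 1 f)
    (hQ_cont : ContinuousOn (fun p : ℝ × G => Q p.1 p.2) (Icc 0 1 ×ˢ univ))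
    (hQ_deriv : ContinuousOn (fun p : ℝ × G => fderiv ℝ (Q p.1) p.2) (Icc 0 1 ×ˢ univ))
    (z : G) :
    ContinuousOn (fun τ => (fderiv ℝ f (Q τ z)).comp (fderiv ℝ (Q τ) z)) (Icc 0 1) :=
  ((hf.continuous_fderiv one_ne_zero).comp_continuousOn
    (hQ_cont.uncurry_right z (mem_univ z))).clm_comp (hQ_deriv.uncurry_right z (mem_univ z))

theorem hasFDerivAt_integral_smul_comp [CompleteSpace E] [ProperSpace G] {Q : ℝ → G → E}
    (hf : ContDiff ℝ 1 f)
    (hQ_cont : ContinuousOn (fun p : ℝ × G => Q p.1 p.2) (Icc 0 1 ×ˢ univ))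
    (hQ_diff : ∀ τ ∈ Icc (0:ℝ) 1, Differentiable ℝ (Q τ))
    (hQ_deriv : ContinuousOn (fun p : ℝ × G => fderiv ℝ (Q p.1) p.2) (Icc 0 1 ×ˢ univ))
    {c : ℝ → ℝ} (hc : ContinuousOn c (Icc 0 1)) (z : G) :
    HasFDerivAt (fun w => ∫ τ in (0:ℝ)..1, c τ • f (Q τ w))
      (∫ τ in (0:ℝ)..1, c τ • (fderiv ℝ f (Q τ z)).comp (fderiv ℝ (Q τ) z)) z := by
  have hc' : ContinuousOn (fun p : ℝ × G => c p.1) (Icc 0 1 ×ˢ univ) :=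
    hc.comp continuous_fst.continuousOn mapsTo_fst_prod
  refine hasFDerivAt_intervalIntegral_of_continuousOn zero_le_one z
    (F := fun τ w => c τ • f (Q τ w))
    (F' := fun τ w => c τ • (fderiv ℝ f (Q τ w)).comp (fderiv ℝ (Q τ) w))
    (hc'.smul (hf.continuous.comp_continuousOn hQ_cont))
    (hc'.smul (((hf.continuous_fderiv one_ne_zero).comp_continuousOn hQ_cont).clm_comp hQ_deriv))
    fun τ hτ w => ?_
  exact ((hf.differentiable one_ne_zero (Q τ w)).hasFDerivAt.comp w
    (hQ_diff τ hτ w).hasFDerivAt).const_smul (c τ)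

theorem fderiv_eq_csRKNStage [ProperSpace E] {Q : ℝ → E × E → E} (hf : ContDiff ℝ 1 f)
    (hQ_cont : ContinuousOn (fun p : ℝ × (E × E) => Q p.1 p.2) (Icc 0 1 ×ˢ univ))
    (hQ_diff : ∀ τ ∈ Icc (0:ℝ) 1, Differentiable ℝ (Q τ))
    (hQ_deriv : ContinuousOn (fun p : ℝ × (E × E) => fderiv ℝ (Q p.1) p.2) (Icc 0 1 ×ˢ univ))
    {h : ℝ} {A : ℝ → ℝ → ℝ} {C : ℝ → ℝ}
    (hA : ContinuousOn (fun p : ℝ × ℝ => A p.1 p.2) (Icc 0 1 ×ˢ Icc 0 1)) {τ : ℝ}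
    (hτ : τ ∈ Icc (0:ℝ) 1) (hQ : ∀ w, Q τ w = csRKNStage h A C (fun σ => f (Q σ w)) w τ)
    (z w : E × E) :
    fderiv ℝ (Q τ) z w =
      csRKNStage h A C (fun σ => fderiv ℝ f (Q σ z) (fderiv ℝ (Q σ) z w)) w τ := by
  have hAτ := hA.uncurry_left τ hτ
  have hD : HasFDerivAt (fun w => csRKNStage h A C (fun σ => f (Q σ w)) w τ) _ z :=
    (hasFDerivAt_snd.add (hasFDerivAt_fst.const_smul (h * C τ))).add
      ((hasFDerivAt_integral_smul_comp hf hQ_cont hQ_diff hQ_deriv hAτ z).const_smul (h ^ 2))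
  rw [funext hQ, hD.fderiv]
  simp [csRKNStage, intervalIntegral_smul_apply ((hAτ.smul
    (continuousOn_fderiv_comp_fderiv hf hQ_cont hQ_deriv z)).intervalIntegrable_of_Icc zero_le_one)]

theorem fderiv_eq_csRKNUpdate [ProperSpace E] {Q : ℝ → E × E → E} (hf : ContDiff ℝ 1 f)
    (hQ_cont : ContinuousOn (fun p : ℝ × (E × E) => Q p.1 p.2) (Icc 0 1 ×ˢ univ))
    (hQ_diff : ∀ τ ∈ Icc (0:ℝ) 1, Differentiable ℝ (Q τ))
    (hQ_deriv : ContinuousOn (fun p : ℝ × (E × E) => fderiv ℝ (Q p.1) p.2) (Icc 0 1 ×ˢ univ))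
    {h : ℝ} {Bbar Bhat : ℝ → ℝ} (hBbar : ContinuousOn Bbar (Icc 0 1))
    (hBhat : ContinuousOn Bhat (Icc 0 1)) {Φ : E × E → E × E}
    (hΦ : ∀ w, Φ w = csRKNUpdate h Bbar Bhat (fun τ => f (Q τ w)) w) (z w : E × E) :
    fderiv ℝ Φ z w =
      csRKNUpdate h Bbar Bhat (fun τ => fderiv ℝ f (Q τ z) (fderiv ℝ (Q τ) z w)) w := by
  have hD : HasFDerivAt (fun w => csRKNUpdate h Bbar Bhat (fun τ => f (Q τ w)) w) _ z :=
    (hasFDerivAt_fst.add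
      ((hasFDerivAt_integral_smul_comp hf hQ_cont hQ_diff hQ_deriv hBhat z).const_smul h)).prodMk
    ((hasFDerivAt_snd.add (hasFDerivAt_fst.const_smul h)).add
      ((hasFDerivAt_integral_smul_comp hf hQ_cont hQ_diff hQ_deriv hBbar z).const_smul (h ^ 2)))
  have hL := continuousOn_fderiv_comp_fderiv hf hQ_cont hQ_deriv z
  rw [funext hΦ, hD.fderiv]
  simp [csRKNUpdate, intervalIntegral_smul_apply ((hBhat.smul hL).intervalIntegrable_of_Icc
    zero_le_one), intervalIntegral_smul_apply ((hBbar.smul hL).intervalIntegrable_of_Icc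
    zero_le_one)]

end Variational

section Symplectic

variable {E : Type*} [NormedAddCommGroup E] [InnerProductSpace ℝ E] [CompleteSpace E]
  {h : ℝ} {A : ℝ → ℝ → ℝ} {Bbar Bhat C : ℝ → ℝ}

def symplecticForm (u v : E × E) : ℝ := ⟪u.1, v.2⟫ - ⟪v.1, u.2⟫

theorem intervalIntegral_inner_smul_csRKNStage
    (hsym1 : ∀ τ ∈ Icc (0:ℝ) 1, Bhat τ * (1 - C τ) = Bbar τ)
    (hA : ContinuousOn (fun p : ℝ × ℝ => A p.1 p.2) (Icc 0 1 ×ˢ Icc 0 1))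
    (hBbar : ContinuousOn Bbar (Icc 0 1)) (hBhat : ContinuousOn Bhat (Icc 0 1))
    {x k : ℝ → E} (hx : ContinuousOn x (Icc 0 1)) (hk : ContinuousOn k (Icc 0 1)) (w : E × E) :
    ∫ τ in (0:ℝ)..1, ⟪x τ, Bhat τ • csRKNStage h A C k w τ⟫ =
      ⟪(csRKNUpdate h Bbar Bhat k w).2, ∫ τ in (0:ℝ)..1, Bhat τ • x τ⟫ -
        h * ⟪w.1, ∫ τ in (0:ℝ)..1, Bbar τ • x τ⟫ -
        h ^ 2 * ∫ τ in (0:ℝ)..1, ⟪x τ, ∫ σ in (0:ℝ)..1, (Bhat τ * (Bbar σ - A τ σ)) • k σ⟫ := by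
  have hM : ContinuousOn (fun p : ℝ × ℝ => (Bhat p.1 * (Bbar p.2 - A p.1 p.2)) • k p.2)
      (Icc 0 1 ×ˢ Icc 0 1) :=
    ((hBhat.comp continuous_fst.continuousOn mapsTo_fst_prod).mul
      ((hBbar.comp continuous_snd.continuousOn mapsTo_snd_prod).sub hA)).smul
      (hk.comp continuous_snd.continuousOn mapsTo_snd_prod)
  have hMk := continuousOn_parametric_intervalIntegral_of_continuousOn
    (F := fun τ σ => (Bhat τ * (Bbar σ - A τ σ)) • k σ) zero_le_one hM
  calc ∫ τ in (0:ℝ)..1, ⟪x τ, Bhat τ • csRKNStage h A C k w τ⟫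
      = ∫ τ in (0:ℝ)..1, (⟪(csRKNUpdate h Bbar Bhat k w).2, Bhat τ • x τ⟫ -
          h * ⟪w.1, Bbar τ • x τ⟫ -
          h ^ 2 * ⟪x τ, ∫ σ in (0:ℝ)..1, (Bhat τ * (Bbar σ - A τ σ)) • k σ⟫) := by
        refine integral_congr fun τ hτ => ?_
        rw [uIcc_of_le zero_le_one] at hτ
        rw [smul_csRKNStage_eq (hsym1 τ hτ)
          ((hBbar.smul hk).intervalIntegrable_of_Icc zero_le_one)
          (((hA.uncurry_left τ hτ).smul hk).intervalIntegrable_of_Icc zero_le_one)]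
        simp only [inner_sub_right, inner_smul_right, real_inner_comm (x τ)]
        ring
    _ = _ := by
        have hint {g : ℝ → ℝ} (hg : ContinuousOn g (Icc 0 1)) : IntervalIntegrable g volume 0 1 :=
          hg.intervalIntegrable_of_Icc zero_le_one
        have i₁ : IntervalIntegrable (fun τ => ⟪(csRKNUpdate h Bbar Bhat k w).2, Bhat τ • x τ⟫)
            volume 0 1 := hint (continuousOn_const.inner (hBhat.smul hx))
        have i₂ : IntervalIntegrable (fun τ => h * ⟪w.1, Bbar τ • x τ⟫) volume 0 1 :=
          hint (continuousOn_const.mul (continuousOn_const.inner (hBbar.smul hx)))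
        have i₃ : IntervalIntegrable (fun τ => h ^ 2 *
            ⟪x τ, ∫ σ in (0:ℝ)..1, (Bhat τ * (Bbar σ - A τ σ)) • k σ⟫) volume 0 1 :=
          hint (continuousOn_const.mul (hx.inner hMk))
        rw [intervalIntegral.integral_sub (i₁.sub i₂) i₃, intervalIntegral.integral_sub i₁ i₂,
          intervalIntegral.integral_const_mul, intervalIntegral.integral_const_mul,
          inner_intervalIntegral (g := fun τ => Bhat τ • x τ) _
            ((hBhat.smul hx).intervalIntegrable_of_Icc zero_le_one),
          inner_intervalIntegral (g := fun τ => Bbar τ • x τ) _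
            ((hBbar.smul hx).intervalIntegrable_of_Icc zero_le_one)]

theorem symplecticForm_csRKNUpdate
    (hA : ContinuousOn (fun p : ℝ × ℝ => A p.1 p.2) (Icc 0 1 ×ˢ Icc 0 1))
    (hBbar : ContinuousOn Bbar (Icc 0 1)) (hBhat : ContinuousOn Bhat (Icc 0 1))
    (hsym1 : ∀ τ ∈ Icc (0:ℝ) 1, Bhat τ * (1 - C τ) = Bbar τ)
    (hsym2 : ∀ τ ∈ Icc (0:ℝ) 1, ∀ σ ∈ Icc (0:ℝ) 1,
      Bhat τ * (Bbar σ - A τ σ) = Bhat σ * (Bbar τ - A σ τ))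
    {a b : ℝ → E} (ha : ContinuousOn a (Icc 0 1)) (hb : ContinuousOn b (Icc 0 1)) (u v : E × E)
    (hstage : ∀ τ ∈ Icc (0:ℝ) 1, ⟪a τ, csRKNStage h A C b v τ⟫ = ⟪b τ, csRKNStage h A C a u τ⟫) :
    symplecticForm (csRKNUpdate h Bbar Bhat a u) (csRKNUpdate h Bbar Bhat b v) =
      symplecticForm u v := by
  have hM : ContinuousOn (fun p : ℝ × ℝ => Bhat p.1 * (Bbar p.2 - A p.1 p.2))
      (Icc 0 1 ×ˢ Icc 0 1) :=
    (hBhat.comp continuous_fst.continuousOn mapsTo_fst_prod).mul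
      ((hBbar.comp continuous_snd.continuousOn mapsTo_snd_prod).sub hA)
  have hweighted : ∫ τ in (0:ℝ)..1, ⟪a τ, Bhat τ • csRKNStage h A C b v τ⟫ =
      ∫ τ in (0:ℝ)..1, ⟪b τ, Bhat τ • csRKNStage h A C a u τ⟫ := by
    refine integral_congr fun τ hτ => ?_
    rw [uIcc_of_le zero_le_one] at hτ
    rw [inner_smul_right, inner_smul_right, hstage τ hτ]
  rw [intervalIntegral_inner_smul_csRKNStage hsym1 hA hBbar hBhat ha hb,
    intervalIntegral_inner_smul_csRKNStage hsym1 hA hBbar hBhat hb ha,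
    intervalIntegral_inner_integral_smul_comm zero_le_one ha hb hM hsym2] at hweighted
  simp only [symplecticForm, csRKNUpdate, inner_add_left, inner_add_right, real_inner_smul_left,
    real_inner_smul_right] at hweighted ⊢
  set αa := ∫ τ in (0:ℝ)..1, Bhat τ • a τ
  set αb := ∫ τ in (0:ℝ)..1, Bhat τ • b τ
  set βa := ∫ τ in (0:ℝ)..1, Bbar τ • a τ
  set βb := ∫ τ in (0:ℝ)..1, Bbar τ • b τ
  linear_combination h * hweighted + h * real_inner_comm v.2 αa - h * real_inner_comm u.2 αb
    + h ^ 2 * real_inner_comm v.1 αa - h ^ 2 * real_inner_comm u.1 αb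
    + h ^ 3 * real_inner_comm βb αa - h ^ 3 * real_inner_comm βa αb
    - h * real_inner_comm u.1 v.1

end Symplectic

section Gradient

open InnerProductSpace

variable {E : Type*} [NormedAddCommGroup E] [InnerProductSpace ℝ E] [CompleteSpace E] {V : E → ℝ}

theorem contDiff_gradient {n : WithTop ℕ∞} (hV : ContDiff ℝ (n + 1) V) :
    ContDiff ℝ n (gradient V) :=
  (toDual ℝ E).symm.contDiff.comp (hV.fderiv_right le_rfl)

theorem inner_fderiv_gradient_comm {x : E} (hV : ContDiffAt ℝ 2 V x) (w y : E) :
    ⟪fderiv ℝ (gradient V) x w, y⟫ = ⟪w, fderiv ℝ (gradient V) x y⟫ := by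
  have hessian (w y : E) : ⟪fderiv ℝ (gradient V) x w, y⟫ = fderiv ℝ (fderiv ℝ V) x w y := by
    rw [show gradient V = (toDual ℝ E).symm ∘ fderiv ℝ V from rfl,
      LinearIsometryEquiv.comp_fderiv]
    exact toDual_symm_apply
  rw [hessian, real_inner_comm, hessian,
    hV.isSymmSndFDerivAt (by simp [minSmoothness_of_isRCLikeNormedField]) w y]

end Gradient

theorem csRKN_symplectic_general
    (d : ℕ) (V : EuclideanSpace ℝ (Fin d) → ℝ) (hV : ContDiff ℝ 2 V)
    (f : EuclideanSpace ℝ (Fin d) → EuclideanSpace ℝ (Fin d))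
    (hf : ∀ q, f q = -gradient V q)
    (h : ℝ)
    (A : ℝ → ℝ → ℝ) (Bbar Bhat C : ℝ → ℝ)
    (hA : ContinuousOn (fun p : ℝ × ℝ => A p.1 p.2) (Set.Icc 0 1 ×ˢ Set.Icc 0 1))
    (hBbar : ContinuousOn Bbar (Set.Icc 0 1))
    (hBhat : ContinuousOn Bhat (Set.Icc 0 1))
    (hsym1 : ∀ τ ∈ Set.Icc (0:ℝ) 1, Bhat τ * (1 - C τ) = Bbar τ)
    (hsym2 : ∀ τ ∈ Set.Icc (0:ℝ) 1, ∀ σ ∈ Set.Icc (0:ℝ) 1,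
      Bhat τ * (Bbar σ - A τ σ) = Bhat σ * (Bbar τ - A σ τ))
    (Q : ℝ → EuclideanSpace ℝ (Fin d) × EuclideanSpace ℝ (Fin d) → EuclideanSpace ℝ (Fin d))
    (hQcont : ContinuousOn
      (fun x : ℝ × (EuclideanSpace ℝ (Fin d) × EuclideanSpace ℝ (Fin d)) => Q x.1 x.2)
      (Set.Icc 0 1 ×ˢ Set.univ))
    (hQdiff : ∀ τ ∈ Set.Icc (0:ℝ) 1, Differentiable ℝ (Q τ))
    (hQderiv : ContinuousOn
      (fun x : ℝ × (EuclideanSpace ℝ (Fin d) × EuclideanSpace ℝ (Fin d)) =>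
        fderiv ℝ (Q x.1) x.2)
      (Set.Icc 0 1 ×ˢ Set.univ))
    (hQ : ∀ τ ∈ Set.Icc (0:ℝ) 1, ∀ p q : EuclideanSpace ℝ (Fin d),
      Q τ (p, q) = q + (h * C τ) • p + (h ^ 2) • ∫ σ in (0:ℝ)..1, A τ σ • f (Q σ (p, q)))
    (Φ : EuclideanSpace ℝ (Fin d) × EuclideanSpace ℝ (Fin d) →
      EuclideanSpace ℝ (Fin d) × EuclideanSpace ℝ (Fin d))
    (hΦ : ∀ p q : EuclideanSpace ℝ (Fin d),
      Φ (p, q) = (p + h • ∫ τ in (0:ℝ)..1, Bhat τ • f (Q τ (p, q)),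
                  q + h • p + (h ^ 2) • ∫ τ in (0:ℝ)..1, Bbar τ • f (Q τ (p, q)))) :
    ∀ z u v : EuclideanSpace ℝ (Fin d) × EuclideanSpace ℝ (Fin d),
      (inner ℝ (fderiv ℝ Φ z u).1 (fderiv ℝ Φ z v).2 : ℝ) -
          (inner ℝ (fderiv ℝ Φ z v).1 (fderiv ℝ Φ z u).2 : ℝ) =
        (inner ℝ u.1 v.2 : ℝ) - (inner ℝ v.1 u.2 : ℝ) := by
  intro z u v
  have hf_eq : f = -gradient V := funext hf
  have hf_smooth : ContDiff ℝ 1 f := hf_eq ▸ (contDiff_gradient hV).neg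
  have hf_symm (x w y : EuclideanSpace ℝ (Fin d)) :
      ⟪fderiv ℝ f x w, y⟫ = ⟪w, fderiv ℝ f x y⟫ := by
    simp only [hf_eq, fderiv_neg, neg_apply, inner_neg_left,
      inner_neg_right, inner_fderiv_gradient_comm hV.contDiffAt]
  have hstage (τ : ℝ) (hτ : τ ∈ Set.Icc (0:ℝ) 1) :=
    fderiv_eq_csRKNStage hf_smooth hQcont hQdiff hQderiv hA hτ (fun w => hQ τ hτ w.1 w.2) z
  have hvar (w : EuclideanSpace ℝ (Fin d) × EuclideanSpace ℝ (Fin d)) :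
      ContinuousOn (fun τ => fderiv ℝ f (Q τ z) (fderiv ℝ (Q τ) z w)) (Set.Icc 0 1) :=
    (continuousOn_fderiv_comp_fderiv hf_smooth hQcont hQderiv z).clm_apply continuousOn_const
  rw [fderiv_eq_csRKNUpdate hf_smooth hQcont hQdiff hQderiv hBbar hBhat (fun w => hΦ w.1 w.2),
    fderiv_eq_csRKNUpdate hf_smooth hQcont hQdiff hQderiv hBbar hBhat (fun w => hΦ w.1 w.2)]
  refine symplecticForm_csRKNUpdate hA hBbar hBhat hsym1 hsym2 (hvar u) (hvar v) u v
    fun τ hτ => ?_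
  rw [← hstage τ hτ, ← hstage τ hτ, hf_symm, real_inner_comm]

/-- A continuous-stage Runge–Kutta–Nyström method whose coefficients
satisfy the symplectic conditions produces a symplectic one-step map for the second-order
system `q̈ = f(q)` with `f = -∇V`. -/
theorem csRKN_symplectic
    (d : ℕ) (V : EuclideanSpace ℝ (Fin d) → ℝ) (hV : ContDiff ℝ 2 V)
    (f : EuclideanSpace ℝ (Fin d) → EuclideanSpace ℝ (Fin d))
    (hf : ∀ q, f q = -gradient V q)
    (h : ℝ) (hh : 0 < h)
    (A : ℝ → ℝ → ℝ) (Bbar Bhat C : ℝ → ℝ)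
    (hA : ContinuousOn (fun p : ℝ × ℝ => A p.1 p.2) (Set.Icc 0 1 ×ˢ Set.Icc 0 1))
    (hBbar : ContinuousOn Bbar (Set.Icc 0 1))
    (hBhat : ContinuousOn Bhat (Set.Icc 0 1))
    (hC : ContinuousOn C (Set.Icc 0 1))
    (hsym1 : ∀ τ ∈ Set.Icc (0:ℝ) 1, Bhat τ * (1 - C τ) = Bbar τ)
    (hsym2 : ∀ τ ∈ Set.Icc (0:ℝ) 1, ∀ σ ∈ Set.Icc (0:ℝ) 1,
      Bhat τ * (Bbar σ - A τ σ) = Bhat σ * (Bbar τ - A σ τ))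
    (Q : ℝ → EuclideanSpace ℝ (Fin d) × EuclideanSpace ℝ (Fin d) → EuclideanSpace ℝ (Fin d))
    (hQcont : ContinuousOn
      (fun x : ℝ × (EuclideanSpace ℝ (Fin d) × EuclideanSpace ℝ (Fin d)) => Q x.1 x.2)
      (Set.Icc 0 1 ×ˢ Set.univ))
    (hQdiff : ∀ τ ∈ Set.Icc (0:ℝ) 1, Differentiable ℝ (Q τ))
    (hQderiv : ContinuousOn
      (fun x : ℝ × (EuclideanSpace ℝ (Fin d) × EuclideanSpace ℝ (Fin d)) =>
        fderiv ℝ (Q x.1) x.2)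
      (Set.Icc 0 1 ×ˢ Set.univ))
    (hQ : ∀ τ ∈ Set.Icc (0:ℝ) 1, ∀ p q : EuclideanSpace ℝ (Fin d),
      Q τ (p, q) = q + (h * C τ) • p + (h ^ 2) • ∫ σ in (0:ℝ)..1, A τ σ • f (Q σ (p, q)))
    (Φ : EuclideanSpace ℝ (Fin d) × EuclideanSpace ℝ (Fin d) →
      EuclideanSpace ℝ (Fin d) × EuclideanSpace ℝ (Fin d))
    (hΦ : ∀ p q : EuclideanSpace ℝ (Fin d),
      Φ (p, q) = (p + h • ∫ τ in (0:ℝ)..1, Bhat τ • f (Q τ (p, q)),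
                  q + h • p + (h ^ 2) • ∫ τ in (0:ℝ)..1, Bbar τ • f (Q τ (p, q)))) :
    ∀ z u v : EuclideanSpace ℝ (Fin d) × EuclideanSpace ℝ (Fin d),
      (inner ℝ (fderiv ℝ Φ z u).1 (fderiv ℝ Φ z v).2 : ℝ) -
          (inner ℝ (fderiv ℝ Φ z v).1 (fderiv ℝ Φ z u).2 : ℝ) =
        (inner ℝ u.1 v.2 : ℝ) - (inner ℝ v.1 u.2 : ℝ) :=
  csRKN_symplectic_general d V hV f hf h A Bbar Bhat C hA hBbar hBhat hsym1 hsym2 Q hQcont hQdiff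
    hQderiv hQ Φ hΦ
end

section
/- Let Ā : [0,1]×[0,1] → ℝ and B̄, B̂ : [0,1] → ℝ be continuous functions satisfying B̂(τ)(B̄(σ) − Ā(τ,σ)) = B̂(σ)(B̄(τ) − Ā(σ,τ)) for all τ, σ ∈ [0,1]. Let m ≥ 1, let ω : ℝ^m × ℝ^m → ℝ be a bilinear map that is skew-symmetric (ω(x,y) = −ω(y,x) for all x, y), and let g : [0,1] → ℝ^m be continuous. Then ∫₀¹ ∫₀¹ B̂(τ)·(B̄(σ) − Ā(τ,σ))·ω(g(τ), g(σ)) dσ dτ = 0. -/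
/-!
The symplectic condition says exactly that the integrand `F τ σ` is antisymmetric on the square,
since `ω` is skew as well. Swapping the order of integration (Fubini) therefore turns the double
integral into its own negative.
-/

open intervalIntegral MeasureTheory Set
open scoped Interval

theorem LinearMap.continuous_uncurry_of_finiteDimensional {𝕜 E F G : Type*}
    [NontriviallyNormedField 𝕜] [CompleteSpace 𝕜]
    [NormedAddCommGroup E] [NormedSpace 𝕜 E] [FiniteDimensional 𝕜 E]
    [NormedAddCommGroup F] [NormedSpace 𝕜 F] [FiniteDimensional 𝕜 F]
    [NormedAddCommGroup G] [NormedSpace 𝕜 G] (ω : E →ₗ[𝕜] F →ₗ[𝕜] G) :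
    Continuous fun p : E × F => ω p.1 p.2 :=
  ((LinearMap.toContinuousLinearMap.toLinearMap ∘ₗ ω).continuous_of_finiteDimensional.comp
    continuous_fst).clm_apply continuous_snd

theorem intervalIntegral_intervalIntegral_eq_zero_of_antisymm {E : Type*}
    [NormedAddCommGroup E] [NormedSpace ℝ E] {F : ℝ → ℝ → E} {a b : ℝ}
    (hF : IntegrableOn F.uncurry (Ι a b ×ˢ Ι a b))
    (hanti : ∀ x ∈ [[a, b]], ∀ y ∈ [[a, b]], F x y = -F y x) :
    ∫ x in a..b, ∫ y in a..b, F x y = 0 := by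
  have hswap : ∫ x in a..b, ∫ y in a..b, F x y = -∫ x in a..b, ∫ y in a..b, F x y := calc
    _ = ∫ y in a..b, ∫ x in a..b, F x y := intervalIntegral_intervalIntegral_swap hF
    _ = ∫ y in a..b, ∫ x in a..b, -F y x :=
      integral_congr fun y hy => integral_congr fun x hx => hanti x hx y hy
    _ = _ := by simp only [intervalIntegral.integral_neg]
  have : IsAddTorsionFree E := .of_isTorsionFree ℝ E
  exact self_eq_neg.mp hswap

theorem csRKN_double_integral_cancellation_general
    (A : ℝ → ℝ → ℝ) (Bbar Bhat : ℝ → ℝ)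
    (hA : ContinuousOn (fun x : ℝ × ℝ => A x.1 x.2) (Set.Icc 0 1 ×ˢ Set.Icc 0 1))
    (hBbar : ContinuousOn Bbar (Set.Icc 0 1))
    (hBhat : ContinuousOn Bhat (Set.Icc 0 1))
    (hsym : ∀ τ ∈ Set.Icc (0:ℝ) 1, ∀ σ ∈ Set.Icc (0:ℝ) 1,
      Bhat τ * (Bbar σ - A τ σ) = Bhat σ * (Bbar τ - A σ τ))
    (m : ℕ)
    (ω : (Fin m → ℝ) →ₗ[ℝ] (Fin m → ℝ) →ₗ[ℝ] ℝ)
    (hω : ∀ x y, ω x y = -ω y x)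
    (g : ℝ → Fin m → ℝ) (hg : ContinuousOn g (Set.Icc 0 1)) :
    ∫ τ in (0:ℝ)..1, ∫ σ in (0:ℝ)..1, Bhat τ * (Bbar σ - A τ σ) * ω (g τ) (g σ) = 0 := by
  set F : ℝ → ℝ → ℝ := fun τ σ => Bhat τ * (Bbar σ - A τ σ) * ω (g τ) (g σ)
  have hBhat₁ : ContinuousOn (fun p : ℝ × ℝ => Bhat p.1) (Icc 0 1 ×ˢ Icc 0 1) :=
    hBhat.comp continuous_fst.continuousOn mapsTo_fst_prod
  have hBbar₂ : ContinuousOn (fun p : ℝ × ℝ => Bbar p.2) (Icc 0 1 ×ˢ Icc 0 1) :=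
    hBbar.comp continuous_snd.continuousOn mapsTo_snd_prod
  have hg₁ : ContinuousOn (fun p : ℝ × ℝ => g p.1) (Icc 0 1 ×ˢ Icc 0 1) :=
    hg.comp continuous_fst.continuousOn mapsTo_fst_prod
  have hg₂ : ContinuousOn (fun p : ℝ × ℝ => g p.2) (Icc 0 1 ×ˢ Icc 0 1) :=
    hg.comp continuous_snd.continuousOn mapsTo_snd_prod
  have hcont : ContinuousOn F.uncurry (Icc 0 1 ×ˢ Icc 0 1) :=
    (hBhat₁.mul (hBbar₂.sub hA)).mul
      (ω.continuous_uncurry_of_finiteDimensional.comp_continuousOn (hg₁.prodMk hg₂))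
  have hanti : ∀ τ ∈ Icc (0:ℝ) 1, ∀ σ ∈ Icc (0:ℝ) 1, F τ σ = -F σ τ := fun τ hτ σ hσ => by
    simp only [F, hsym τ hτ σ hσ, hω (g τ) (g σ)]
    ring
  refine intervalIntegral_intervalIntegral_eq_zero_of_antisymm ?_ (by simpa using hanti)
  rw [uIoc_of_le zero_le_one]
  exact (hcont.integrableOn_compact (isCompact_Icc.prod isCompact_Icc)).mono_set
    (prod_mono Ioc_subset_Icc_self Ioc_subset_Icc_self)

/-- The key cancellation: under the symplectic condition on the
coefficients, the antisymmetrized double integral vanishes. -/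
theorem csRKN_double_integral_cancellation
    (A : ℝ → ℝ → ℝ) (Bbar Bhat : ℝ → ℝ)
    (hA : ContinuousOn (fun x : ℝ × ℝ => A x.1 x.2) (Set.Icc 0 1 ×ˢ Set.Icc 0 1))
    (hBbar : ContinuousOn Bbar (Set.Icc 0 1))
    (hBhat : ContinuousOn Bhat (Set.Icc 0 1))
    (hsym : ∀ τ ∈ Set.Icc (0:ℝ) 1, ∀ σ ∈ Set.Icc (0:ℝ) 1,
      Bhat τ * (Bbar σ - A τ σ) = Bhat σ * (Bbar τ - A σ τ))
    (m : ℕ) (hm : 1 ≤ m)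
    (ω : (Fin m → ℝ) →ₗ[ℝ] (Fin m → ℝ) →ₗ[ℝ] ℝ)
    (hω : ∀ x y, ω x y = -ω y x)
    (g : ℝ → Fin m → ℝ) (hg : ContinuousOn g (Set.Icc 0 1)) :
    ∫ τ in (0:ℝ)..1, ∫ σ in (0:ℝ)..1, Bhat τ * (Bbar σ - A τ σ) * ω (g τ) (g σ) = 0 :=
  csRKN_double_integral_cancellation_general A Bbar Bhat hA hBbar hBhat hsym m ω hω g hg
end

section
/- Let α : ℕ × ℕ → ℝ be finitely supported with α(0,1) − α(1,0) = −√3/6 and α(i,j) = α(j,i) whenever i + j > 1. Define Ā(τ,σ) = Σ_{i,j} α(i,j)·P_i(τ)·P_j(σ) for τ, σ ∈ [0,1], and set B̄(τ) = 1 − τ, B̂(τ) = 1, C(τ) = τ. Then these coefficients satisfy the symplectic conditions: (i) B̂(τ)(1 − C(τ)) = B̄(τ) for all τ ∈ [0,1]; (ii) B̂(τ)(B̄(σ) − Ā(τ,σ)) = B̂(σ)(B̄(τ) − Ā(σ,τ)) for all τ, σ ∈ [0,1]; equivalently, Ā(τ,σ) − Ā(σ,τ) = τ − σ for all τ, σ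 ∈ [0,1]. -/
/-- The `n`-th normalized shifted Legendre polynomial on `[0,1]`, via Rodrigues' formula.
For `n = 0` this formula gives the constant `1`. -/
noncomputable def legP (n : ℕ) (x : ℝ) : ℝ :=
  Real.sqrt (2 * n + 1) / n.factorial *
    iteratedDeriv n (fun t : ℝ => t ^ n * (t - 1) ^ n) x

/-! `Ā(τ,σ) - Ā(σ,τ)` is the expansion with the antisymmetrised coefficients
`α(i,j) - α(j,i)`, and the symmetry hypothesis kills all of them except those at `(0,1)` and
`(1,0)`. Since `P_0 = 1` and `P_1 = √3 (2x - 1)`, what remains is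
`(α(0,1) - α(1,0)) (P_1(σ) - P_1(τ)) = -(√3/6) · 2√3 (σ - τ) = τ - σ`. -/

lemma legP_zero (x : ℝ) : legP 0 x = 1 := by
  simp [legP]

lemma legP_one (x : ℝ) : legP 1 x = Real.sqrt 3 * (2 * x - 1) := by
  have hderiv : deriv (fun t : ℝ => t ^ 1 * (t - 1) ^ 1) x = 2 * x - 1 := by
    have h : HasDerivAt (fun t : ℝ => t * (t - 1)) (1 * (x - 1) + x * 1) x :=
      (hasDerivAt_id' x).mul ((hasDerivAt_id' x).sub_const 1)
    simp only [pow_one, h.deriv]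
    ring
  simp only [legP, iteratedDeriv_one, hderiv]
  norm_num

section BilinearExpansion

variable {ι X R : Type*} [CommRing R] (P : ι → X → R)

def bilinExpansion (α : (ι × ι) →₀ R) (x y : X) : R :=
  α.sum fun p c => c * P p.1 x * P p.2 y

lemma bilinExpansion_single (p : ι × ι) (c : R) (x y : X) :
    bilinExpansion P (Finsupp.single p c) x y = c * P p.1 x * P p.2 y :=
  Finsupp.sum_single_index (by simp)

lemma bilinExpansion_sub (α β : (ι × ι) →₀ R) (x y : X) :
    bilinExpansion P (α - β) x y = bilinExpansion P α x y - bilinExpansion P β x y :=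
  Finsupp.sum_sub_index fun _ _ _ => by ring

lemma bilinExpansion_sub_swap (α : (ι × ι) →₀ R) (x y : X) :
    bilinExpansion P α x y - bilinExpansion P α y x =
      bilinExpansion P (α - α.equivMapDomain (Equiv.prodComm ι ι)) x y := by
  rw [bilinExpansion_sub, bilinExpansion, bilinExpansion, bilinExpansion,
    Finsupp.sum_equivMapDomain]
  congr 1
  refine Finsupp.sum_congr fun p _ => ?_
  simp only [Equiv.prodComm_apply, Prod.fst_swap, Prod.snd_swap]
  ring

end BilinearExpansion

lemma sub_equivMapDomain_prodComm_eq {R : Type*} [AddCommGroup R] (α : (ℕ × ℕ) →₀ R)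
    (hsymm : ∀ i j : ℕ, 1 < i + j → α (i, j) = α (j, i)) :
    α - α.equivMapDomain (Equiv.prodComm ℕ ℕ) =
      Finsupp.single (0, 1) (α (0, 1) - α (1, 0)) -
        Finsupp.single (1, 0) (α (0, 1) - α (1, 0)) := by
  ext ⟨i, j⟩
  simp only [Finsupp.coe_sub, Pi.sub_apply, Finsupp.equivMapDomain_apply,
    Equiv.prodComm_symm, Equiv.prodComm_apply, Prod.swap_prod_mk, Finsupp.single_apply,
    Prod.mk.injEq]
  by_cases hij : 1 < i + j
  · rw [hsymm i j hij, if_neg (by omega), if_neg (by omega)]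
    simp
  · rcases (by omega : (i = 0 ∧ j = 0) ∨ (i = 0 ∧ j = 1) ∨ (i = 1 ∧ j = 0)) with
      ⟨rfl, rfl⟩ | ⟨rfl, rfl⟩ | ⟨rfl, rfl⟩ <;> simp

lemma legendre_expansion_sub_swap (α : (ℕ × ℕ) →₀ ℝ)
    (h1 : α (0, 1) - α (1, 0) = -(Real.sqrt 3) / 6)
    (h2 : ∀ i j : ℕ, 1 < i + j → α (i, j) = α (j, i)) (τ σ : ℝ) :
    bilinExpansion legP α τ σ - bilinExpansion legP α σ τ = τ - σ := by
  rw [bilinExpansion_sub_swap, sub_equivMapDomain_prodComm_eq α h2, bilinExpansion_sub,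
    bilinExpansion_single, bilinExpansion_single, h1]
  simp only [legP_zero, legP_one]
  linear_combination (τ - σ) / 3 * Real.mul_self_sqrt (show (0 : ℝ) ≤ 3 by norm_num)

/-- A Legendre expansion `Ā(τ,σ) = Σ α(i,j) P_i(τ) P_j(σ)` with
`α(0,1) − α(1,0) = −√3/6` and `α(i,j) = α(j,i)` for `i + j > 1`, together with
`B̄(τ) = 1 − τ`, `B̂ = 1`, `C(τ) = τ`, satisfies the symplectic conditions. -/
theorem legendre_expansion_symplectic
    (α : (ℕ × ℕ) →₀ ℝ)
    (h1 : α (0, 1) - α (1, 0) = -(Real.sqrt 3) / 6)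
    (h2 : ∀ i j : ℕ, 1 < i + j → α (i, j) = α (j, i))
    (A : ℝ → ℝ → ℝ)
    (hA : ∀ τ σ : ℝ, A τ σ = α.sum fun p c => c * legP p.1 τ * legP p.2 σ)
    (Bbar Bhat C : ℝ → ℝ)
    (hBbar : ∀ τ, Bbar τ = 1 - τ) (hBhat : ∀ τ, Bhat τ = 1) (hC : ∀ τ, C τ = τ) :
    (∀ τ ∈ Set.Icc (0:ℝ) 1, Bhat τ * (1 - C τ) = Bbar τ) ∧
    (∀ τ ∈ Set.Icc (0:ℝ) 1, ∀ σ ∈ Set.Icc (0:ℝ) 1,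
      Bhat τ * (Bbar σ - A τ σ) = Bhat σ * (Bbar τ - A σ τ)) ∧
    (∀ τ ∈ Set.Icc (0:ℝ) 1, ∀ σ ∈ Set.Icc (0:ℝ) 1, A τ σ - A σ τ = τ - σ) := by
  have hskew (τ σ : ℝ) : A τ σ - A σ τ = τ - σ := by
    rw [hA, hA]
    exact legendre_expansion_sub_swap α h1 h2 τ σ
  refine ⟨fun τ _ => by rw [hBhat, hC, hBbar, one_mul], fun τ _ σ _ => ?_,
    fun τ _ σ _ => hskew τ σ⟩
  rw [hBhat, hBhat, hBbar, hBbar, one_mul, one_mul]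
  linarith [hskew τ σ]
end

section
/- Let Ā : [0,1]×[0,1] → ℝ and B̄, B̂, C : [0,1] → ℝ satisfy the symplectic conditions (i) B̂(τ)(1 − C(τ)) = B̄(τ) for all τ ∈ [0,1] and (ii) B̂(τ)(B̄(σ) − Ā(τ,σ)) = B̂(σ)(B̄(τ) − Ā(σ,τ)) for all τ, σ ∈ [0,1]. Let r ≥ 1 and let b, c : Fin r → ℝ with c_i ∈ [0,1] for all i be the weights and nodes of a quadrature formula. Define the Runge–Kutta–Nyström coefficients a_{ij} = b_j·Ā(c_i, c_j), β̄_i = b_i·B̄(c_i), β̂_i = b_i·B̂(c_i), and γ_i = C(c_i). Then these coefficients satisfy the classical symplectic RKN conditions: β̄_i = β̂_i·(1 − γ_i) for all i, and β̂_i·(β̄_j − a_{ij}) = β̂_j·(β̄_i − a_{ji}) for all i, j. -/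
/-! The symplectic conditions are pointwise identities in the nodes, and the quadrature
coefficients are those identities multiplied by the weights: condition (i) at `cᵢ` times `bᵢ`,
condition (ii) at `(cᵢ, cⱼ)` times `bᵢ bⱼ`. -/

variable {ι α R : Type*} [CommRing R]

def IsSymplecticCsRKN (S : Set α) (A : α → α → R) (Bbar Bhat C : α → R) : Prop :=
  (∀ τ ∈ S, Bhat τ * (1 - C τ) = Bbar τ) ∧
    ∀ τ ∈ S, ∀ σ ∈ S, Bhat τ * (Bbar σ - A τ σ) = Bhat σ * (Bbar τ - A σ τ)

def IsSymplecticRKN (a : ι → ι → R) (βbar βhat γ : ι → R) : Prop :=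
  (∀ i, βbar i = βhat i * (1 - γ i)) ∧
    ∀ i j, βhat i * (βbar j - a i j) = βhat j * (βbar i - a j i)

theorem IsSymplecticCsRKN.isSymplecticRKN_quadrature {S : Set α} {A : α → α → R}
    {Bbar Bhat C : α → R} (h : IsSymplecticCsRKN S A Bbar Bhat C) (b : ι → R) {c : ι → α}
    (hc : ∀ i, c i ∈ S) :
    IsSymplecticRKN (fun i j => b j * A (c i) (c j)) (fun i => b i * Bbar (c i))
      (fun i => b i * Bhat (c i)) (fun i => C (c i)) := by
  obtain ⟨hsym1, hsym2⟩ := h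
  refine ⟨fun i => ?_, fun i j => ?_⟩ <;> dsimp only
  · rw [← hsym1 (c i) (hc i)]
    ring
  · calc b i * Bhat (c i) * (b j * Bbar (c j) - b j * A (c i) (c j))
        = b i * b j * (Bhat (c i) * (Bbar (c j) - A (c i) (c j))) := by ring
      _ = b i * b j * (Bhat (c j) * (Bbar (c i) - A (c j) (c i))) := by
        rw [hsym2 (c i) (hc i) (c j) (hc j)]
      _ = b j * Bhat (c j) * (b i * Bbar (c i) - b i * A (c j) (c i)) := by ring

theorem quadrature_preserves_symplecticity_general
    (A : ℝ → ℝ → ℝ) (Bbar Bhat C : ℝ → ℝ)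
    (hsym1 : ∀ τ ∈ Set.Icc (0:ℝ) 1, Bhat τ * (1 - C τ) = Bbar τ)
    (hsym2 : ∀ τ ∈ Set.Icc (0:ℝ) 1, ∀ σ ∈ Set.Icc (0:ℝ) 1,
      Bhat τ * (Bbar σ - A τ σ) = Bhat σ * (Bbar τ - A σ τ))
    (r : ℕ)
    (b c : Fin r → ℝ) (hc : ∀ i, c i ∈ Set.Icc (0:ℝ) 1)
    (a : Fin r → Fin r → ℝ) (βbar βhat γ : Fin r → ℝ)
    (ha : ∀ i j, a i j = b j * A (c i) (c j))
    (hβbar : ∀ i, βbar i = b i * Bbar (c i))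
    (hβhat : ∀ i, βhat i = b i * Bhat (c i))
    (hγ : ∀ i, γ i = C (c i)) :
    (∀ i, βbar i = βhat i * (1 - γ i)) ∧
    (∀ i j, βhat i * (βbar j - a i j) = βhat j * (βbar i - a j i)) := by
  obtain rfl : a = fun i j => b j * A (c i) (c j) := funext₂ ha
  obtain rfl : βbar = fun i => b i * Bbar (c i) := funext hβbar
  obtain rfl : βhat = fun i => b i * Bhat (c i) := funext hβhat
  obtain rfl : γ = fun i => C (c i) := funext hγ
  exact IsSymplecticCsRKN.isSymplecticRKN_quadrature ⟨hsym1, hsym2⟩ b hc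

/-- Applying a quadrature formula `(b_i, c_i)` to a csRKN method
satisfying the continuous symplectic conditions yields an RKN method satisfying the
classical symplectic RKN conditions. -/
theorem quadrature_preserves_symplecticity
    (A : ℝ → ℝ → ℝ) (Bbar Bhat C : ℝ → ℝ)
    (hsym1 : ∀ τ ∈ Set.Icc (0:ℝ) 1, Bhat τ * (1 - C τ) = Bbar τ)
    (hsym2 : ∀ τ ∈ Set.Icc (0:ℝ) 1, ∀ σ ∈ Set.Icc (0:ℝ) 1,
      Bhat τ * (Bbar σ - A τ σ) = Bhat σ * (Bbar τ - A σ τ))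
    (r : ℕ) (hr : 1 ≤ r)
    (b c : Fin r → ℝ) (hc : ∀ i, c i ∈ Set.Icc (0:ℝ) 1)
    (a : Fin r → Fin r → ℝ) (βbar βhat γ : Fin r → ℝ)
    (ha : ∀ i j, a i j = b j * A (c i) (c j))
    (hβbar : ∀ i, βbar i = b i * Bbar (c i))
    (hβhat : ∀ i, βhat i = b i * Bhat (c i))
    (hγ : ∀ i, γ i = C (c i)) :
    (∀ i, βbar i = βhat i * (1 - γ i)) ∧
    (∀ i j, βhat i * (βbar j - a i j) = βhat j * (βbar i - a j i)) :=
  quadrature_preserves_symplecticity_general A Bbar Bhat C hsym1 hsym2 r b c hc a βbar βhat γ ha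
    hβbar hβhat hγ
end

section
/- Let A, Â : [0,1]×[0,1] → ℝ and B : [0,1] → ℝ be continuous with ∫₀¹ B(τ) dτ = 1, and set C(τ) = ∫₀¹ A(τ,σ) dσ. Let h ∈ ℝ, let p, q ∈ ℝ^d, let g : [0,1] → ℝ^d be continuous, and suppose Q, P : [0,1] → ℝ^d are continuous and satisfy for all τ ∈ [0,1]: Q(τ) = q + h·∫₀¹ A(τ,σ)·P(σ) dσ and P(τ) = p + h·∫₀¹ Â(τ,σ)·g(σ) dσ. Define Ā(τ,ρ) = ∫₀¹ A(τ,σ)·Â(σ,ρ) dσ and B̄(σ) = ∫₀¹ B(τ)·Â(τ,σ) dτ. Then (1) for all τ ∈ [0,1]: Q(τ) = q + h·C(τ)·p + h²·∫₀¹ Ā(τ,ρ)·g(ρ) dρ, and (2) q + h·∫₀¹ B(τ)·P(τ) dτ = q + h·p + h²·∫₀¹ B̄(σ)·g(σ) dσ. -/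
/-!
Substituting the stage equation for `P` into `∫ W(σ) P(σ) dσ`, for any continuous weight `W`,
gives `(∫ W) p + h ∫∫ W(σ) Â(σ,ρ) g(ρ) dρ dσ`, and Fubini moves the `σ`-integral onto the
kernel. The weights `W = A(τ,·)` and `W = B` produce the two csRKN formulas.
-/

open MeasureTheory Set

variable {E : Type*} [NormedAddCommGroup E] [NormedSpace ℝ E] [CompleteSpace E]

lemma intervalIntegral_integral_smul_swap {a b : ℝ} {K : ℝ → ℝ → ℝ} {g : ℝ → E}
    (hK : ContinuousOn (Function.uncurry K) (uIcc a b ×ˢ uIcc a b))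
    (hg : ContinuousOn g (uIcc a b)) :
    ∫ s in a..b, ∫ r in a..b, K s r • g r = ∫ r in a..b, (∫ s in a..b, K s r) • g r := by
  have hcont : ContinuousOn (Function.uncurry fun s r => K s r • g r) (uIcc a b ×ˢ uIcc a b) :=
    hK.smul (hg.comp continuous_snd.continuousOn fun _ hx => hx.2)
  rw [intervalIntegral_intervalIntegral_swap
    ((hcont.integrableOn_compact (isCompact_uIcc.prod isCompact_uIcc)).mono_set
      (prod_mono uIoc_subset_uIcc uIoc_subset_uIcc))]
  simp_rw [intervalIntegral.integral_smul_const]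

lemma intervalIntegral_smul_stage_eq {a b h : ℝ} {p : E} {W : ℝ → ℝ} {Ahat : ℝ → ℝ → ℝ}
    {g P : ℝ → E} (hW : ContinuousOn W (uIcc a b))
    (hAhat : ContinuousOn (Function.uncurry Ahat) (uIcc a b ×ˢ uIcc a b))
    (hg : ContinuousOn g (uIcc a b)) (hPc : ContinuousOn P (uIcc a b))
    (hP : ∀ τ ∈ uIcc a b, P τ = p + h • ∫ σ in a..b, Ahat τ σ • g σ) :
    ∫ σ in a..b, W σ • P σ
      = (∫ σ in a..b, W σ) • p + h • ∫ ρ in a..b, (∫ σ in a..b, W σ * Ahat σ ρ) • g ρ := by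
  have hWAhat : ContinuousOn (Function.uncurry fun σ ρ => W σ * Ahat σ ρ)
      (uIcc a b ×ˢ uIcc a b) :=
    (hW.comp continuous_fst.continuousOn fun _ hx => hx.1).mul hAhat
  have hstage : ∀ σ ∈ uIcc a b,
      W σ • (P σ - p) = h • ∫ ρ in a..b, (W σ * Ahat σ ρ) • g ρ := fun σ hσ => by
    rw [hP σ hσ, add_sub_cancel_left, smul_comm, ← intervalIntegral.integral_smul]
    simp_rw [smul_smul]
  calc ∫ σ in a..b, W σ • P σ
      = ∫ σ in a..b, W σ • p + W σ • (P σ - p) := by simp_rw [← smul_add, add_sub_cancel]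
    _ = (∫ σ in a..b, W σ) • p + ∫ σ in a..b, W σ • (P σ - p) := by
        have hWp : ContinuousOn (fun σ => W σ • p) (uIcc a b) := hW.smul continuousOn_const
        have hWP : ContinuousOn (fun σ => W σ • (P σ - p)) (uIcc a b) :=
          hW.smul (hPc.sub continuousOn_const)
        rw [intervalIntegral.integral_add hWp.intervalIntegrable hWP.intervalIntegrable,
          intervalIntegral.integral_smul_const]
    _ = (∫ σ in a..b, W σ) • p + h • ∫ ρ in a..b, (∫ σ in a..b, W σ * Ahat σ ρ) • g ρ := by
        rw [intervalIntegral.integral_congr hstage, intervalIntegral.integral_smul,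
          intervalIntegral_integral_smul_swap hWAhat hg]

theorem csPRK_to_csRKN_general
    (d : ℕ) (A Ahat : ℝ → ℝ → ℝ) (B : ℝ → ℝ)
    (hA : ContinuousOn (fun x : ℝ × ℝ => A x.1 x.2) (Set.Icc 0 1 ×ˢ Set.Icc 0 1))
    (hAhat : ContinuousOn (fun x : ℝ × ℝ => Ahat x.1 x.2) (Set.Icc 0 1 ×ˢ Set.Icc 0 1))
    (hB : ContinuousOn B (Set.Icc 0 1))
    (hBint : (∫ τ in (0:ℝ)..1, B τ) = 1)
    (C : ℝ → ℝ) (hC : ∀ τ, C τ = ∫ σ in (0:ℝ)..1, A τ σ)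
    (h : ℝ) (p q : EuclideanSpace ℝ (Fin d))
    (g : ℝ → EuclideanSpace ℝ (Fin d)) (hg : ContinuousOn g (Set.Icc 0 1))
    (Q P : ℝ → EuclideanSpace ℝ (Fin d))
    (hPc : ContinuousOn P (Set.Icc 0 1))
    (hQ : ∀ τ ∈ Set.Icc (0:ℝ) 1, Q τ = q + h • ∫ σ in (0:ℝ)..1, A τ σ • P σ)
    (hP : ∀ τ ∈ Set.Icc (0:ℝ) 1, P τ = p + h • ∫ σ in (0:ℝ)..1, Ahat τ σ • g σ)
    (Abar : ℝ → ℝ → ℝ)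
    (hAbar : ∀ τ ρ, Abar τ ρ = ∫ σ in (0:ℝ)..1, A τ σ * Ahat σ ρ)
    (Bbar : ℝ → ℝ)
    (hBbar : ∀ σ, Bbar σ = ∫ τ in (0:ℝ)..1, B τ * Ahat τ σ) :
    (∀ τ ∈ Set.Icc (0:ℝ) 1,
        Q τ = q + (h * C τ) • p + (h ^ 2) • ∫ ρ in (0:ℝ)..1, Abar τ ρ • g ρ) ∧
    (q + h • ∫ τ in (0:ℝ)..1, B τ • P τ) =
      q + h • p + (h ^ 2) • ∫ σ in (0:ℝ)..1, Bbar σ • g σ := by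
  rw [← uIcc_of_le zero_le_one] at hA hAhat hB hg hPc hQ hP ⊢
  have elim := fun W hW => intervalIntegral_smul_stage_eq (W := W) hW hAhat hg hPc hP
  refine ⟨fun τ hτ => ?_, ?_⟩
  · have hAτ : ContinuousOn (A τ) (uIcc 0 1) :=
      hA.comp (Continuous.prodMk_right τ).continuousOn fun _ hσ => ⟨hτ, hσ⟩
    rw [hQ τ hτ, elim _ hAτ, ← hC, funext (hAbar τ), smul_add, smul_smul, smul_smul, sq,
      add_assoc]
  · rw [elim B hB, hBint, funext hBbar, one_smul, smul_add, smul_smul, sq, add_assoc]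

/-- Eliminating the internal stage `P` from a continuous-stage
partitioned Runge–Kutta method yields the continuous-stage Runge–Kutta–Nyström form,
with `Ā(τ,ρ) = ∫₀¹ A(τ,σ)Â(σ,ρ) dσ` and `B̄(σ) = ∫₀¹ B(τ)Â(τ,σ) dτ`. -/
theorem csPRK_to_csRKN
    (d : ℕ) (A Ahat : ℝ → ℝ → ℝ) (B : ℝ → ℝ)
    (hA : ContinuousOn (fun x : ℝ × ℝ => A x.1 x.2) (Set.Icc 0 1 ×ˢ Set.Icc 0 1))
    (hAhat : ContinuousOn (fun x : ℝ × ℝ => Ahat x.1 x.2) (Set.Icc 0 1 ×ˢ Set.Icc 0 1))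
    (hB : ContinuousOn B (Set.Icc 0 1))
    (hBint : (∫ τ in (0:ℝ)..1, B τ) = 1)
    (C : ℝ → ℝ) (hC : ∀ τ, C τ = ∫ σ in (0:ℝ)..1, A τ σ)
    (h : ℝ) (p q : EuclideanSpace ℝ (Fin d))
    (g : ℝ → EuclideanSpace ℝ (Fin d)) (hg : ContinuousOn g (Set.Icc 0 1))
    (Q P : ℝ → EuclideanSpace ℝ (Fin d))
    (hQc : ContinuousOn Q (Set.Icc 0 1)) (hPc : ContinuousOn P (Set.Icc 0 1))
    (hQ : ∀ τ ∈ Set.Icc (0:ℝ) 1, Q τ = q + h • ∫ σ in (0:ℝ)..1, A τ σ • P σ)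
    (hP : ∀ τ ∈ Set.Icc (0:ℝ) 1, P τ = p + h • ∫ σ in (0:ℝ)..1, Ahat τ σ • g σ)
    (Abar : ℝ → ℝ → ℝ)
    (hAbar : ∀ τ ρ, Abar τ ρ = ∫ σ in (0:ℝ)..1, A τ σ * Ahat σ ρ)
    (Bbar : ℝ → ℝ)
    (hBbar : ∀ σ, Bbar σ = ∫ τ in (0:ℝ)..1, B τ * Ahat τ σ) :
    (∀ τ ∈ Set.Icc (0:ℝ) 1,
        Q τ = q + (h * C τ) • p + (h ^ 2) • ∫ ρ in (0:ℝ)..1, Abar τ ρ • g ρ) ∧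
    (q + h • ∫ τ in (0:ℝ)..1, B τ • P τ) =
      q + h • p + (h ^ 2) • ∫ σ in (0:ℝ)..1, Bbar σ • g σ :=
  csPRK_to_csRKN_general d A Ahat B hA hAhat hB hBint C hC h p q g hg Q P hPc hQ hP Abar hAbar Bbar
    hBbar
end

section
/- For all real parameters α, β, the coefficient functions Ā(τ,σ) = α + (β − √3/6)·P_1(σ) + β·P_1(τ), B̄(τ) = 1 − τ, B̂(τ) = 1, C(τ) = τ (for τ, σ ∈ [0,1]) satisfy the symplectic conditions: (i) B̂(τ)(1 − C(τ)) = B̄(τ) for all τ ∈ [0,1]; (ii) B̂(τ)(B̄(σ) − Ā(τ,σ)) = B̂(σ)(B̄(τ) − Ā(σ,τ)) for all τ, σ ∈ [0,1]. -/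
lemma sqrt_three_div_six_mul_legP_one_sub (σ τ : ℝ) :
    Real.sqrt 3 / 6 * (legP 1 σ - legP 1 τ) = σ - τ := by
  have h3 : Real.sqrt 3 * Real.sqrt 3 = 3 := Real.mul_self_sqrt (by norm_num)
  rw [legP_one, legP_one]
  linear_combination (σ - τ) / 3 * h3

/-- The two-parameter family
`Ā(τ,σ) = α + (β − √3/6)P₁(σ) + βP₁(τ)`, `B̄(τ) = 1 − τ`, `B̂ = 1`, `C(τ) = τ`
satisfies the symplectic conditions. -/
theorem order2_family_symplectic
    (α β : ℝ) (A : ℝ → ℝ → ℝ)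
    (hA : ∀ τ σ : ℝ, A τ σ = α + (β - Real.sqrt 3 / 6) * legP 1 σ + β * legP 1 τ)
    (Bbar Bhat C : ℝ → ℝ)
    (hBbar : ∀ τ, Bbar τ = 1 - τ) (hBhat : ∀ τ, Bhat τ = 1) (hC : ∀ τ, C τ = τ) :
    (∀ τ ∈ Set.Icc (0:ℝ) 1, Bhat τ * (1 - C τ) = Bbar τ) ∧
    (∀ τ ∈ Set.Icc (0:ℝ) 1, ∀ σ ∈ Set.Icc (0:ℝ) 1,
      Bhat τ * (Bbar σ - A τ σ) = Bhat σ * (Bbar τ - A σ τ)) := by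
  refine ⟨fun τ _ => by rw [hBhat, hC, hBbar, one_mul], fun τ _ σ _ => ?_⟩
  rw [hA, hA, hBhat, hBhat, hBbar, hBbar]
  linear_combination sqrt_three_div_six_mul_legP_one_sub σ τ
end

section
/- Consider the 2-stage tableau with nodes c₁ = 0, c₂ = 2/3 and entries ā₁₁ = 1/8 + α/4 − (√3/2)β + (3/4)γ, ā₁₂ = −1/8 + (3/4)α − (√3/2)β − (3/4)γ, ā₂₁ = 1/8 + α/4 − (√3/6)β − (1/4)γ, ā₂₂ = −1/8 + (3/4)α + (√3/2)β + (1/4)γ, for real parameters α, β, γ. Then ā₁₁ = ā₁₂ = ā₂₂ = 0 holds if and only if α = 1/8, β = √3/24, γ = −1/8, and in that case ā₂₁ = 1/6; together with b̄₁ = b̄₂ = 1/4, b₁ = 1/4, b₂ = 3/4, the resulting explicit tableau satisfies the symplectic RKN conditions b̄ᵢ = bᵢ(1 − cᵢ) and bᵢ(b̄ⱼ − ā_{ij}) = bⱼ(b̄ᵢ − ā_{ji}) for all i, j ∈ {1,2}, and the second-order conditions b₁ + b₂ = 1 and b₁c₁ + b₂c₂ = 1/2. -/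
/-!
Setting `ā₁₁ = ā₁₂ = ā₂₂ = 0` is a nonsingular linear system in `(α, β, γ)`, whose unique
solution turns `Ā` into the strictly lower triangular matrix with `ā₂₁ = 1/6`. For two stages
the symplecticity condition `bᵢ(b̄ⱼ − āᵢⱼ) = bⱼ(b̄ᵢ − āⱼᵢ)` is trivial on the diagonal and
symmetric in `(i, j)`, so it reduces to the single equation `b₁ b̄₂ = b₂ (b̄₁ − ā₂₁)`, i.e.
`1/16 = 1/16`.
-/

open Real

/-- `āᵢⱼ = bⱼ Ā(cᵢ, cⱼ)` for the Radau-left nodes `c = (0, 2/3)` and weights `b = (1/4, 3/4)`. -/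
noncomputable def radauLeftCoeff (α β γ : ℝ) : Fin 2 → Fin 2 → ℝ :=
  ![![1 / 8 + α / 4 - (√3 / 2) * β + (3 / 4) * γ,
      -(1 / 8) + (3 / 4) * α - (√3 / 2) * β - (3 / 4) * γ],
    ![1 / 8 + α / 4 - (√3 / 6) * β - (1 / 4) * γ,
      -(1 / 8) + (3 / 4) * α + (√3 / 2) * β + (1 / 4) * γ]]

theorem radauLeftCoeff_explicit_iff (α β γ : ℝ) :
    (radauLeftCoeff α β γ 0 0 = 0 ∧ radauLeftCoeff α β γ 0 1 = 0 ∧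
        radauLeftCoeff α β γ 1 1 = 0) ↔
      (α = 1 / 8 ∧ β = √3 / 24 ∧ γ = -(1 / 8)) := by
  have hs : √3 ^ 2 = 3 := sq_sqrt (by norm_num)
  simp only [radauLeftCoeff, Matrix.cons_val_zero, Matrix.cons_val_one]
  constructor
  · rintro ⟨h₁₁, h₁₂, h₂₂⟩
    refine ⟨by linear_combination (1 / 4) * h₁₁ + (1 / 2) * h₁₂ + (3 / 4) * h₂₂, ?_,
      by linear_combination (3 / 4) * h₁₁ - (1 / 2) * h₁₂ + (1 / 4) * h₂₂⟩
    linear_combination -(√3 / 4) * h₁₁ - (√3 / 6) * h₁₂ + (√3 / 4) * h₂₂ - (β / 3) * hs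
  · rintro ⟨rfl, rfl, rfl⟩
    exact ⟨by linear_combination -(1 / 48) * hs, by linear_combination -(1 / 48) * hs,
      by linear_combination (1 / 48) * hs⟩

theorem radauLeftCoeff_explicit :
    radauLeftCoeff (1 / 8) (√3 / 24) (-(1 / 8)) = ![![0, 0], ![1 / 6, 0]] := by
  have hs : √3 ^ 2 = 3 := sq_sqrt (by norm_num)
  ext i j
  fin_cases i <;> fin_cases j <;>
    simp only [radauLeftCoeff, Fin.zero_eta, Fin.mk_one, Matrix.cons_val_zero,
      Matrix.cons_val_one]
  · linear_combination -(1 / 48) * hs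
  · linear_combination -(1 / 48) * hs
  · linear_combination -(1 / 144) * hs
  · linear_combination (1 / 48) * hs

theorem symplectic_condition_fin_two_iff {R : Type*} [CommRing R]
    (a : Fin 2 → Fin 2 → R) (bbar b : Fin 2 → R) :
    (∀ i j, b i * (bbar j - a i j) = b j * (bbar i - a j i)) ↔
      b 0 * (bbar 1 - a 0 1) = b 1 * (bbar 0 - a 1 0) := by
  refine ⟨fun h ↦ h 0 1, fun h ↦ ?_⟩
  simp only [Fin.forall_fin_two, and_true, true_and]
  exact ⟨h, h.symm⟩

/-- In the Radau-left-based two-stage family, the explicitness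
conditions `ā₁₁ = ā₁₂ = ā₂₂ = 0` hold iff `α = 1/8`, `β = √3/24`, `γ = −1/8`; in that
case `ā₂₁ = 1/6` and the resulting explicit tableau satisfies the symplectic RKN
conditions and the second-order conditions. -/
theorem radau_left_explicit_symplectic
    (α β γ : ℝ) (a : Fin 2 → Fin 2 → ℝ) (bbar b c : Fin 2 → ℝ)
    (ha : a = ![![1 / 8 + α / 4 - (Real.sqrt 3 / 2) * β + (3 / 4) * γ,
                  -(1 / 8) + (3 / 4) * α - (Real.sqrt 3 / 2) * β - (3 / 4) * γ],
                ![1 / 8 + α / 4 - (Real.sqrt 3 / 6) * β - (1 / 4) * γ,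
                  -(1 / 8) + (3 / 4) * α + (Real.sqrt 3 / 2) * β + (1 / 4) * γ]])
    (hbbar : bbar = ![1 / 4, 1 / 4])
    (hb : b = ![1 / 4, 3 / 4])
    (hc : c = ![0, 2 / 3]) :
    ((a 0 0 = 0 ∧ a 0 1 = 0 ∧ a 1 1 = 0) ↔
      (α = 1 / 8 ∧ β = Real.sqrt 3 / 24 ∧ γ = -(1 / 8))) ∧
    ((α = 1 / 8 ∧ β = Real.sqrt 3 / 24 ∧ γ = -(1 / 8)) →
      (a 1 0 = 1 / 6 ∧
       (∀ i, bbar i = b i * (1 - c i)) ∧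
       (∀ i j, b i * (bbar j - a i j) = b j * (bbar i - a j i)) ∧
       b 0 + b 1 = 1 ∧
       b 0 * c 0 + b 1 * c 1 = 1 / 2)) := by
  obtain rfl : a = radauLeftCoeff α β γ := ha
  subst hbbar hb hc
  refine ⟨radauLeftCoeff_explicit_iff α β γ, ?_⟩
  rintro ⟨rfl, rfl, rfl⟩
  rw [radauLeftCoeff_explicit, symplectic_condition_fin_two_iff, Fin.forall_fin_two]
  norm_num
end
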